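/- arXiv:1607.00307 — 3 statements merged into one kernel-verified Lean document; each statement's English description precedes it below -/
import Mathlib

section
/- For every integer l ≥ 2, writing log₂ l = i + f with i = ⌊log₂ l⌋ and f the fractional part, the inequality ⌈log₂(l/3)⌉ + 2 ≤ ⌈log₂ l⌉ holds if and only if 0 < f ≤ log₂ 3 − 1. -/
/-- For every integer l ≥ 2, writing log₂ l = i + f with f the fractional part,
the inequality ⌈log₂(l/3)⌉ + 2 ≤ ⌈log₂ l⌉ holds iff 0 < f ≤ log₂ 3 − 1. -/
theorem stmt3 (l : ℤ) (hl : 2 ≤ l) :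
    ⌈Real.logb 2 ((l : ℝ) / 3)⌉ + 2 ≤ ⌈Real.logb 2 (l : ℝ)⌉ ↔
      0 < Int.fract (Real.logb 2 (l : ℝ)) ∧
        Int.fract (Real.logb 2 (l : ℝ)) ≤ Real.logb 2 3 - 1 := by
  have hl0 : (0:ℝ) < (l:ℝ) := by exact_mod_cast lt_of_lt_of_le (by norm_num) hl
  have hc1 : 1 < Real.logb 2 3 := by
    have h := Real.logb_lt_logb (by norm_num : (1:ℝ) < 2) (by norm_num : (0:ℝ) < 2)
      (by norm_num : (2:ℝ) < 3)
    rwa [Real.logb_self_eq_one (by norm_num)] at h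
  have hc2 : Real.logb 2 3 < 2 := by
    have h := Real.logb_lt_logb (by norm_num : (1:ℝ) < 2) (by norm_num : (0:ℝ) < 3)
      (by norm_num : (3:ℝ) < 4)
    have h4 : Real.logb 2 4 = 2 := by
      rw [show (4:ℝ) = 2^(2:ℕ) by norm_num, Real.logb_pow,
        Real.logb_self_eq_one (by norm_num)]
      norm_num
    rwa [h4] at h
  set L := Real.logb 2 (l:ℝ) with hLdef
  set c := Real.logb 2 3 with hcdef
  have hdiv : Real.logb 2 ((l:ℝ)/3) = L - c := by
    rw [hLdef, hcdef, Real.logb_div (ne_of_gt hl0) (by norm_num)]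
  rw [hdiv]
  have hfl : ((⌊L⌋ : ℝ)) + Int.fract L = L := Int.floor_add_fract L
  rcases eq_or_lt_of_le (Int.fract_nonneg L) with h0 | h0
  · -- fract L = 0, both sides false
    have hLint : L = (⌊L⌋ : ℝ) := by linarith
    have hceil : ⌈L⌉ = ⌊L⌋ := by rw [hLint, Int.ceil_intCast, Int.floor_intCast]
    constructor
    · intro h
      exfalso
      have : (⌊L⌋ - 2 : ℤ) < ⌈L - c⌉ := by
        rw [Int.lt_ceil]
        push_cast
        linarith
      omega
    · rintro ⟨h1, _⟩; exact absurd h1 (by linarith)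
  · -- fract L > 0
    have hf1 : Int.fract L < 1 := Int.fract_lt_one L
    have hceil : ⌈L⌉ = ⌊L⌋ + 1 := by
      apply le_antisymm
      · apply Int.ceil_le.2; push_cast; linarith
      · rw [Int.add_one_le_iff, Int.lt_ceil]; linarith
    rw [hceil]
    constructor
    · intro h
      refine ⟨h0, ?_⟩
      have hle : ⌈L - c⌉ ≤ ⌊L⌋ - 1 := by omega
      have := Int.ceil_le.1 hle
      push_cast at this
      linarith
    · rintro ⟨_, h2⟩
      have hle : ⌈L - c⌉ ≤ ⌊L⌋ - 1 := by
        apply Int.ceil_le.2; push_cast; linarith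
      omega
end

section
/- For every integer l ≥ 2, the maximal integer x ≥ 2 such that ⌈(−1 + √(4x² − 12x + 8l + 1))/2⌉ = ⌈(−1 + √(8l − 8))/2⌉ satisfies x < (√(4 + 4√(8l − 8)) + 3)/2. -/
/-- For l ≥ 2, the maximal integer x ≥ 2 with
⌈(−1 + √(4x² − 12x + 8l + 1))/2⌉ = ⌈(−1 + √(8l − 8))/2⌉ satisfies
x < (√(4 + 4√(8l − 8)) + 3)/2. -/
theorem stmt15 (l x : ℤ) (hl : 2 ≤ l)
    (hmax : IsGreatest {y : ℤ | 2 ≤ y ∧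
        ⌈(-1 + Real.sqrt (4 * (y : ℝ) ^ 2 - 12 * y + 8 * l + 1)) / 2⌉ =
          ⌈(-1 + Real.sqrt (8 * (l : ℝ) - 8)) / 2⌉} x) :
    (x : ℝ) < (Real.sqrt (4 + 4 * Real.sqrt (8 * (l : ℝ) - 8)) + 3) / 2 := by
  obtain ⟨⟨hx2, hceil⟩, -⟩ := hmax
  have hl8 : (0:ℝ) ≤ 8 * (l:ℝ) - 8 := by
    have : (2:ℝ) ≤ l := by exact_mod_cast hl
    linarith
  set s := Real.sqrt (8 * (l:ℝ) - 8) with hs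
  have hs0 : 0 ≤ s := Real.sqrt_nonneg _
  have hx2' : (2:ℝ) ≤ (x:ℝ) := by exact_mod_cast hx2
  have hAnn : 0 ≤ 4 * (x:ℝ)^2 - 12*x + 8*l + 1 := by nlinarith
  have h1 : (-1 + Real.sqrt (4 * (x:ℝ)^2 - 12*(x:ℝ) + 8*(l:ℝ) + 1)) / 2 < (-1 + s)/2 + 1 := by
    calc (-1 + Real.sqrt (4 * (x:ℝ)^2 - 12*(x:ℝ) + 8*(l:ℝ) + 1)) / 2
        ≤ (⌈(-1 + Real.sqrt (4 * (x:ℝ)^2 - 12*(x:ℝ) + 8*(l:ℝ) + 1)) / 2⌉ : ℝ) := Int.le_ceil _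
      _ = (⌈(-1 + s)/2⌉ : ℝ) := by exact_mod_cast hceil
      _ < _ := Int.ceil_lt_add_one _
  have h2 : Real.sqrt (4 * (x:ℝ)^2 - 12*x + 8*l + 1) < s + 2 := by linarith
  have h3 : 4 * (x:ℝ)^2 - 12*x + 8*l + 1 < (s+2)^2 := by
    nlinarith [Real.sq_sqrt hAnn, Real.sqrt_nonneg (4 * (x:ℝ)^2 - 12*x + 8*l + 1)]
  have hss : s^2 = 8*(l:ℝ) - 8 := Real.sq_sqrt hl8
  have h4 : (2*(x:ℝ)-3)^2 < 4 + 4*s := by nlinarith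
  have h5 : 2*(x:ℝ)-3 < Real.sqrt (4 + 4*s) := by
    nlinarith [Real.sq_sqrt (show (0:ℝ) ≤ 4 + 4*s by linarith), Real.sqrt_nonneg (4+4*s)]
  linarith
end

section
/- For all integers k ≥ 0 and integers l with 2(d+1)^{k} ≥ l ≥ 2 (d ≥ 1 fixed), a processor that processes 2 message blocks and then d·k chaining values, one chaining value per unit of time with d chaining values absorbable per unit, spends exactly 2 + k units of time; hence the most-loaded processor in the recursive construction runs in ⌈log_{d+1}(l/2)⌉ + 2 units of time. -/
/-- A processor processing 2 message blocks and then d·k chaining values, absorbing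
d chaining values per unit of time, spends exactly 2 + k units of time; hence when
k is the least j with 2(d+1)^j ≥ l, the most-loaded processor runs in
⌈log_{d+1}(l/2)⌉ + 2 units of time. -/
theorem stmt17 (d l : ℤ) (hd : 1 ≤ d) (hl : 2 ≤ l) (k : ℕ)
    (hk : IsLeast {j : ℕ | (l : ℝ) ≤ 2 * ((d : ℝ) + 1) ^ j} k) :
    2 + (d * k) / d = 2 + (k : ℤ) ∧
      (2 : ℤ) + k = ⌈Real.logb ((d : ℝ) + 1) ((l : ℝ) / 2)⌉ + 2 := by
  have hd0 : d ≠ 0 := by omega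
  have hb : (1 : ℝ) < (d : ℝ) + 1 := by
    have : (1 : ℝ) ≤ (d : ℝ) := by exact_mod_cast hd
    linarith
  have hx0 : (0 : ℝ) < (l : ℝ) / 2 := by
    have : (2 : ℝ) ≤ (l : ℝ) := by exact_mod_cast hl
    linarith
  constructor
  · rw [Int.mul_ediv_cancel_left _ hd0]
  · have hmem : (l : ℝ) ≤ 2 * ((d : ℝ) + 1) ^ k := hk.1
    have hceil : ⌈Real.logb ((d : ℝ) + 1) ((l : ℝ) / 2)⌉ = (k : ℤ) := by
      have hle : Real.logb ((d : ℝ) + 1) ((l : ℝ) / 2) ≤ (k : ℝ) := by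
        rw [Real.logb_le_iff_le_rpow hb hx0, Real.rpow_natCast]
        linarith
      rcases Nat.eq_zero_or_pos k with hk0 | hk0
      · subst hk0
        have h2 : (l : ℝ) = 2 := by
          have : (l:ℝ) ≤ 2 := by simpa using hmem
          have : l ≤ 2 := by exact_mod_cast this
          have : l = 2 := le_antisymm this hl
          exact_mod_cast congrArg (Int.cast : ℤ → ℝ) this
        rw [h2]
        norm_num
      · apply le_antisymm
        · exact_mod_cast Int.ceil_le.mpr hle
        · rw [Int.le_ceil_iff]
          have hnot : ¬ (l : ℝ) ≤ 2 * ((d : ℝ) + 1) ^ (k - 1) := by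
            intro h
            exact absurd (hk.2 h) (by omega)
          push_neg at hnot
          have hlt : ((d : ℝ) + 1) ^ (k - 1) < (l : ℝ) / 2 := by linarith
          rw [Real.lt_logb_iff_rpow_lt hb hx0]
          push_cast
          rw [show (((k:ℕ):ℝ) - 1 : ℝ) = ((k - 1 : ℕ) : ℝ) by
              rw [Nat.cast_sub hk0]; norm_num, Real.rpow_natCast]
          exact hlt
    omega
end
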